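/- An infinite binary string S has VC dimension 1 if and only if it is of one of the forms 0^a 1 0^*, 1^a 0^* (a ≥ 1, possibly a infinite), or 0^a (1 0^b)^c 1 0^* with 0 ≤ a ≤ b, b ≥ 1, c ≥ 1 (possibly c infinite). -/

import Mathlib

/-- The family of subsets of `ℕ` arising from finite contiguous substrings of `S`:
a substring starting at `t` of length `w` yields `{i | i < w ∧ S (t+i) = true}`. -/
def subFam (S : ℕ → Bool) : Set (Set ℕ) :=
  {A | ∃ t w : ℕ, A = {i | i < w ∧ S (t + i) = true}}

/-- The subfamily arising from substrings of a fixed length `w`. -/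
def subFamW (S : ℕ → Bool) (w : ℕ) : Set (Set ℕ) :=
  {A | ∃ t : ℕ, A = {i | i < w ∧ S (t + i) = true}}

/-- A family of subsets of `ℕ` shatters a finite set `A`. -/
def FamShatters (F : Set (Set ℕ)) (A : Finset ℕ) : Prop :=
  ∀ B ⊆ A, ∃ C ∈ F, ∀ i ∈ A, (i ∈ C ↔ i ∈ B)

/-- The VC dimension of a family of subsets of `ℕ`, as an extended natural. -/
noncomputable def vcDimF (F : Set (Set ℕ)) : ℕ∞ :=
  sSup {n : ℕ∞ | ∃ A : Finset ℕ, FamShatters F A ∧ (A.card : ℕ∞) = n}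

/-- The VC dimension of a binary string. -/
noncomputable def VCdim (S : ℕ → Bool) : ℕ∞ := vcDimF (subFam S)

/-- The sliding-window VC dimension of a binary string. -/
noncomputable def SWdim (S : ℕ → Bool) : ℕ∞ := ⨆ w : ℕ, vcDimF (subFamW S w)

/-!
A pair `{i, j}` with `i < j` is shattered by the windows of `S` exactly when `d = j - i` is the
distance between two ones of `S` and some one of `S` has a zero at distance `d` before it. So
`VCdim S = 1` says that `S` has a one and that its set of ones `T` is closed under shifting back
by every distance realised inside `T`.

For such a `T`, let `a = min T` and let `a + m` be the next one. Shifting back by `m` forces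
`a < m` (otherwise `a - m ∈ T`), forces `T ⊆ a + mℕ` by strong induction, and makes
`{j | a + j m ∈ T}` an initial segment of `ℕ`. Conversely, when `a < m` membership in such a
progression is read off from the residue mod `m` and the quotient by `m`, and a shift by a
realised distance (a multiple of `m`) preserves the residue and does not increase the quotient.
The forms in the statement are these progressions, sorted by step and length.
-/

theorem FamShatters.mono {F : Set (Set ℕ)} {A A' : Finset ℕ} (h : FamShatters F A)
    (hA : A' ⊆ A) : FamShatters F A' := by
  intro B hB
  obtain ⟨C, hC, hCB⟩ := h B (hB.trans hA)
  exact ⟨C, hC, fun i hi ↦ hCB i (hA hi)⟩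

theorem le_vcDimF {F : Set (Set ℕ)} {A : Finset ℕ} (h : FamShatters F A) :
    (A.card : ℕ∞) ≤ vcDimF F :=
  le_sSup ⟨A, h, rfl⟩

theorem vcDimF_le_iff {F : Set (Set ℕ)} {k : ℕ∞} :
    vcDimF F ≤ k ↔ ∀ A : Finset ℕ, FamShatters F A → (A.card : ℕ∞) ≤ k := by
  simp only [vcDimF, sSup_le_iff, Set.mem_ofPred_eq, forall_exists_index, and_imp]
  exact ⟨fun h A hA ↦ h _ A hA rfl, by rintro h _ A hA rfl; exact h A hA⟩

theorem vcDimF_le_one_iff {F : Set (Set ℕ)} :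
    vcDimF F ≤ 1 ↔ ∀ i j, i < j → ¬FamShatters F {i, j} := by
  refine ⟨fun h i j hij hs ↦ ?_, fun h ↦ vcDimF_le_iff.2 fun A hA ↦ ?_⟩
  · have := (le_vcDimF hs).trans h
    rw [Finset.card_pair hij.ne] at this
    exact absurd this (by norm_num)
  · by_contra! hcard
    obtain ⟨i, hi, j, hj, hij⟩ := Finset.one_lt_card.1 (by exact_mod_cast hcard)
    rcases hij.lt_or_gt with hij | hji
    · exact h i j hij (hA.mono (by simp [Finset.insert_subset_iff, hi, hj]))
    · exact h j i hji (hA.mono (by simp [Finset.insert_subset_iff, hi, hj]))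

section Windows

variable {S : ℕ → Bool}

theorem subFam_shatters_singleton_zero {n : ℕ} (hn : S n = true) :
    FamShatters (subFam S) {0} := by
  intro B hB
  rcases Finset.subset_singleton_iff.1 hB with rfl | rfl
  · exact ⟨_, ⟨0, 0, rfl⟩, by simp⟩
  · exact ⟨_, ⟨n, 1, rfl⟩, by simp [hn]⟩

theorem exists_true_of_subFam_shatters {A : Finset ℕ} (hA : FamShatters (subFam S) A)
    (hne : A.Nonempty) : ∃ n, S n = true := by
  obtain ⟨i, hi⟩ := hne
  obtain ⟨_, ⟨t, w, rfl⟩, hC⟩ := hA A subset_rfl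
  exact ⟨t + i, ((hC i hi).2 hi).2⟩

theorem one_le_vcdim_iff : 1 ≤ VCdim S ↔ ∃ n, S n = true := by
  constructor
  · intro h
    by_contra hS
    have : VCdim S ≤ 0 := vcDimF_le_iff.2 fun A hA ↦ by
      simpa [Finset.not_nonempty_iff_eq_empty] using mt (exists_true_of_subFam_shatters hA) hS
    exact absurd (h.trans this) (by norm_num)
  · rintro ⟨n, hn⟩
    simpa [VCdim] using le_vcDimF (subFam_shatters_singleton_zero hn)

theorem subFam_shatters_pair {d p q : ℕ} (hd : d ≠ 0) (hp : S p = true)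
    (hpd : S (p + d) = true) (hq : S q = false) (hqd : S (q + d) = true) :
    FamShatters (subFam S) {0, d} := by
  intro B _
  by_cases h0 : 0 ∈ B <;> by_cases hdB : d ∈ B
  · exact ⟨_, ⟨p, d + 1, rfl⟩, by simp [h0, hdB, hp, hpd]⟩
  · exact ⟨_, ⟨p, 1, rfl⟩, by simp [h0, hdB, hp, hd]⟩
  · exact ⟨_, ⟨q, d + 1, rfl⟩, by simp [h0, hdB, hq, hqd]⟩
  · exact ⟨_, ⟨0, 0, rfl⟩, by simp [h0, hdB]⟩

theorem exists_of_subFam_shatters_pair {i j : ℕ} (hij : i < j)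
    (h : FamShatters (subFam S) {i, j}) :
    (∃ p, S p = true ∧ S (p + (j - i)) = true) ∧ ∃ q, S q = false ∧ S (q + (j - i)) = true := by
  obtain ⟨_, ⟨t, w, rfl⟩, hC⟩ := h {i, j} subset_rfl
  obtain ⟨_, ⟨t', w', rfl⟩, hC'⟩ := h {j} (by simp)
  have hi := (hC i (by simp)).2 (by simp)
  have hj := (hC j (by simp)).2 (by simp)
  have hj' := (hC' j (by simp)).2 (by simp)
  have hi' := (hC' i (by simp)).not.2 (by simp [hij.ne])
  refine ⟨⟨t + i, hi.2, ?_⟩, t' + i, by simpa [hij.trans hj'.1] using hi', ?_⟩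
  · rw [add_assoc, Nat.add_sub_cancel' hij.le]; exact hj.2
  · rw [add_assoc, Nat.add_sub_cancel' hij.le]; exact hj'.2

def BackShiftClosed (S : ℕ → Bool) : Prop :=
  ∀ d p q, S p = true → S (p + d) = true → S (q + d) = true → S q = true

theorem vcdim_le_one_iff : VCdim S ≤ 1 ↔ BackShiftClosed S := by
  refine ⟨fun h d p q hp hpd hqd ↦ ?_, fun h ↦ vcDimF_le_one_iff.2 fun i j hij hs ↦ ?_⟩
  · rcases eq_or_ne d 0 with rfl | hd
    · exact hqd
    by_contra hq
    exact vcDimF_le_one_iff.1 h 0 d (Nat.pos_of_ne_zero hd)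
      (subFam_shatters_pair hd hp hpd (by simpa using hq) hqd)
  · obtain ⟨⟨p, hp, hpd⟩, q, hq, hqd⟩ := exists_of_subFam_shatters_pair hij hs
    simp [h _ p q hp hpd hqd] at hq

end Windows

theorem IsLowerSet.exists_mem_iff_coe_lt {s : Set ℕ} (hs : IsLowerSet s) :
    ∃ c : ℕ∞, ∀ j : ℕ, j ∈ s ↔ (j : ℕ∞) < c := by
  rcases hs.eq_univ_or_Iio with rfl | ⟨c, rfl⟩
  · exact ⟨⊤, by simp⟩
  · exact ⟨c, by simp⟩

theorem exists_eq_add_mul_iff {a m n : ℕ} {P : ℕ → Prop} (ham : a < m) :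
    (∃ j, P j ∧ n = a + j * m) ↔ n % m = a ∧ P (n / m) := by
  constructor
  · rintro ⟨j, hj, rfl⟩
    rw [Nat.add_mul_mod_self_right, Nat.mod_eq_of_lt ham, Nat.add_mul_div_right _ _ (by omega),
      Nat.div_eq_of_lt ham, zero_add]
    exact ⟨rfl, hj⟩
  · rintro ⟨hn, hP⟩
    refine ⟨n / m, hP, ?_⟩
    rw [← hn, mul_comm]
    exact (Nat.mod_add_div n m).symm

section Progressions

variable {S : ℕ → Bool} {a m : ℕ}

def IsProgression (S : ℕ → Bool) (a m : ℕ) (c : ℕ∞) : Prop :=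
  ∀ n, S n = true ↔ ∃ j : ℕ, (j : ℕ∞) < c ∧ n = a + j * m

theorem isProgression_coe_iff {k : ℕ} :
    IsProgression S a m k ↔ ∀ n, S n = true ↔ ∃ j < k, n = a + j * m := by
  simp [IsProgression]

theorem isProgression_top_iff :
    IsProgression S a m ⊤ ↔ ∀ n, S n = true ↔ ∃ j, n = a + j * m := by
  simp [IsProgression]

theorem isProgression_one_iff : IsProgression S a m 1 ↔ ∀ n, S n = true ↔ n = a := by
  simp [IsProgression]

theorem IsProgression.exists_true {c : ℕ∞} (h : IsProgression S a m c) (hc : 1 ≤ c) :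
    ∃ n, S n = true :=
  ⟨a, (h a).2 ⟨0, by simpa [Order.one_le_iff_pos] using hc, by simp⟩⟩

theorem IsProgression.backShiftClosed {c : ℕ∞} (h : IsProgression S a m c) (ham : a < m) :
    BackShiftClosed S := by
  have h' (n : ℕ) : S n = true ↔ n % m = a ∧ ((n / m : ℕ) : ℕ∞) < c :=
    (h n).trans (exists_eq_add_mul_iff ham)
  intro d p q hp hpd hqd
  rw [h'] at hp hpd hqd ⊢
  have hd : d ≡ 0 [MOD m] := Nat.ModEq.add_left_cancel' p (hpd.1.trans hp.1.symm)
  have hq : (q + d) % m = q % m := hd.add_left q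
  exact ⟨hq.symm.trans hqd.1, lt_of_le_of_lt (by gcongr; omega) hqd.2⟩

theorem BackShiftClosed.exists_eq_add_mul (hS : BackShiftClosed S) (hm : 0 < m)
    (ha : S a = true) (ham : S (a + m) = true) (hfirst : ∀ n < a, S n ≠ true)
    (hgap : ∀ k, 0 < k → k < m → S (a + k) ≠ true) (n : ℕ) (hn : S n = true) :
    ∃ j, n = a + j * m := by
  induction n using Nat.strong_induction_on with
  | _ n ih =>
    by_cases hnm : a + m ≤ n
    · obtain ⟨j, hj⟩ := ih (n - m) (by omega)
        (hS m a (n - m) ha ham (by rwa [Nat.sub_add_cancel (by omega)]))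
      exact ⟨j + 1, by rw [add_one_mul, ← add_assoc, ← hj]; omega⟩
    · have han : a ≤ n := by by_contra! h; exact hfirst n h hn
      refine ⟨0, ?_⟩
      by_contra! hne
      exact hgap (n - a) (by omega) (by omega) (by rwa [Nat.add_sub_cancel' han])

theorem BackShiftClosed.exists_isProgression (hS : BackShiftClosed S)
    (hone : ∃ n, S n = true) : ∃ a m c, a < m ∧ 1 ≤ c ∧ IsProgression S a m c := by
  obtain ⟨a, ha, hfirst⟩ : ∃ a, S a = true ∧ ∀ n < a, S n ≠ true :=
    ⟨Nat.find hone, Nat.find_spec hone, fun n ↦ Nat.find_min hone⟩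
  by_cases hnext : ∃ m, 0 < m ∧ S (a + m) = true
  · obtain ⟨m, ⟨hm, ham⟩, hgap⟩ : ∃ m, (0 < m ∧ S (a + m) = true) ∧
        ∀ k, 0 < k → k < m → S (a + k) ≠ true :=
      ⟨Nat.find hnext, Nat.find_spec hnext, fun k hk hkm h ↦ Nat.find_min hnext hkm ⟨hk, h⟩⟩
    have hlt : a < m := by
      by_contra! hma
      exact hfirst (a - m) (by omega)
        (hS m a (a - m) ha ham (by rwa [Nat.sub_add_cancel hma]))
    have hlower : IsLowerSet {j | S (a + j * m) = true} :=
      isLowerSet_setOfPred.2 <| antitone_nat_of_succ_le fun j hj ↦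
        hS m a _ ha ham (by rwa [add_assoc, ← add_one_mul])
    obtain ⟨c, hc⟩ := hlower.exists_mem_iff_coe_lt
    refine ⟨a, m, c, hlt, ?_, fun n ↦ ⟨fun hn ↦ ?_, ?_⟩⟩
    · simpa [Order.one_le_iff_pos] using (hc 0).1 (by simpa using ha)
    · obtain ⟨j, rfl⟩ := hS.exists_eq_add_mul hm ha ham hfirst hgap n hn
      exact ⟨j, (hc j).1 hn, rfl⟩
    · rintro ⟨j, hj, rfl⟩
      exact (hc j).2 hj
  · push Not at hnext
    refine ⟨a, a + 1, 1, by omega, le_rfl,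
      isProgression_one_iff.2 fun n ↦ ⟨fun hn ↦ ?_, ?_⟩⟩
    · by_contra! hne
      rcases hne.lt_or_gt with hlt | hgt
      · exact hfirst n hlt hn
      · exact hnext (n - a) (by omega) (by rwa [Nat.add_sub_cancel' hgt.le])
    · rintro rfl
      exact ha

theorem exists_isProgression_iff :
    (∃ a m c, a < m ∧ 1 ≤ c ∧ IsProgression S a m c) ↔
      (∃ a : ℕ, 1 ≤ a ∧ ∀ n : ℕ, S n = true ↔ n = a) ∨
          ((∀ n : ℕ, S n = true) ∨ ∃ a : ℕ, 1 ≤ a ∧ ∀ n : ℕ, S n = true ↔ n < a) ∨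
          (∃ a b : ℕ, a ≤ b ∧ 1 ≤ b ∧
            ((∃ c : ℕ, 1 ≤ c ∧ ∀ n : ℕ, S n = true ↔ ∃ j ≤ c, n = a + j * (b + 1)) ∨
              (∀ n : ℕ, S n = true ↔ ∃ j : ℕ, n = a + j * (b + 1)))) := by
  constructor
  · rintro ⟨a, m, c, ham, hc, h⟩
    obtain rfl | hm := eq_or_lt_of_le (show 1 ≤ m by omega)
    · obtain rfl : a = 0 := by omega
      induction c using ENat.recTopCoe with
      | top => exact Or.inr <| Or.inl <| Or.inl fun n ↦ (h n).2 ⟨n, by simp⟩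
      | coe k =>
        exact Or.inr <| Or.inl <| Or.inr
          ⟨k, by exact_mod_cast hc, fun n ↦ by simp [isProgression_coe_iff.1 h n]⟩
    · obtain ⟨b, rfl⟩ : ∃ b, m = b + 1 := ⟨m - 1, by omega⟩
      induction c using ENat.recTopCoe with
      | top =>
        exact Or.inr <| Or.inr ⟨a, b, by omega, by omega, Or.inr (isProgression_top_iff.1 h)⟩
      | coe k =>
        have hk : 1 ≤ k := by exact_mod_cast hc
        obtain ⟨c, rfl⟩ : ∃ c, k = c + 1 := ⟨k - 1, by omega⟩
        rcases Nat.eq_zero_or_pos c with rfl | hc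
        · have h1 := isProgression_one_iff.1 (by simpa using h)
          rcases Nat.eq_zero_or_pos a with rfl | ha
          -- a lone one at position `0` is listed as `1^1 0^*`
          · exact Or.inr <| Or.inl <| Or.inr ⟨1, le_rfl, by simpa using h1⟩
          · exact Or.inl ⟨a, ha, h1⟩
        · exact Or.inr <| Or.inr ⟨a, b, by omega, by omega, Or.inl
            ⟨c, hc, fun n ↦ by simp [isProgression_coe_iff.1 h n]⟩⟩
  · rintro (⟨a, ha, h⟩ | (h | ⟨a, ha, h⟩) | ⟨a, b, hab, hb, ⟨c, hc, h⟩ | h⟩)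
    · exact ⟨a, a + 1, 1, by omega, le_rfl, isProgression_one_iff.2 h⟩
    · exact ⟨0, 1, ⊤, by omega, le_top, isProgression_top_iff.2 fun n ↦ by simp [h n]⟩
    · exact ⟨0, 1, a, by omega, by exact_mod_cast ha,
        isProgression_coe_iff.2 fun n ↦ by simp [h n]⟩
    · exact ⟨a, b + 1, (c + 1 : ℕ), by omega, by simp,
        isProgression_coe_iff.2 fun n ↦ by simp [h n]⟩
    · exact ⟨a, b + 1, ⊤, by omega, le_top, isProgression_top_iff.2 h⟩

end Progressions

/-- An infinite binary string has VC dimension 1 iff it is of one of the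
forms `0^a 1 0^*` (`a ≥ 1`), `1^a 0^*` (`a ≥ 1`, possibly infinite), or
`0^a (1 0^b)^c 1 0^*` (`0 ≤ a ≤ b`, `b ≥ 1`, `c ≥ 1`, possibly `c` infinite). -/
theorem vcdim_eq_one_iff (S : ℕ → Bool) :
    VCdim S = 1 ↔
      ((∃ a : ℕ, 1 ≤ a ∧ ∀ n : ℕ, S n = true ↔ n = a) ∨
        ((∀ n : ℕ, S n = true) ∨ ∃ a : ℕ, 1 ≤ a ∧ ∀ n : ℕ, S n = true ↔ n < a) ∨
        (∃ a b : ℕ, a ≤ b ∧ 1 ≤ b ∧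
          ((∃ c : ℕ, 1 ≤ c ∧ ∀ n : ℕ, S n = true ↔ ∃ j ≤ c, n = a + j * (b + 1)) ∨
            (∀ n : ℕ, S n = true ↔ ∃ j : ℕ, n = a + j * (b + 1))))) := by
  calc VCdim S = 1 ↔ (∃ n, S n = true) ∧ BackShiftClosed S := by
        rw [le_antisymm_iff, vcdim_le_one_iff, one_le_vcdim_iff, and_comm]
    _ ↔ ∃ a m c, a < m ∧ 1 ≤ c ∧ IsProgression S a m c :=
      ⟨fun ⟨hone, hS⟩ ↦ hS.exists_isProgression hone,
        fun ⟨_, _, _, ham, hc, h⟩ ↦ ⟨h.exists_true hc, h.backShiftClosed ham⟩⟩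
    _ ↔ _ := exists_isProgression_iff
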